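/- arXiv:1802.05734 — 2 statements merged into one kernel-verified Lean document; each statement's English description precedes it below -/
import Mathlib

section
/- For every uncountable cardinal κ and every ordinal α < κ, there exists an ordinal β such that for all η with 1 ≤ η ≤ α, the ordinal ω^(ω^(β+η)) is multiplicatively closed, lies strictly below κ, and is not a cardinal (its cardinality equals the cardinality of ω^(ω^β), which is strictly smaller than it). -/
/-!
Take `β = α`. Since `ω ^ ω ^ x` has cardinality `max ℵ₀ x.card` and `η ≤ α`, every
`ω ^ ω ^ (α + η)` has the cardinality `max ℵ₀ α.card < κ` of `ω ^ ω ^ α`, while for `η ≥ 1`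
it is strictly larger than `ω ^ ω ^ α`, hence larger than its own initial ordinal.
-/

open Ordinal Cardinal

theorem Ordinal.card_omega0_opow_omega0_opow (x : Ordinal) :
    (ω ^ ω ^ x).card = max ℵ₀ x.card := by
  rw [card_omega0_opow (opow_ne_zero x omega0_ne_zero)]
  rcases eq_or_ne x 0 with rfl | hx
  · simp
  · rw [card_omega0_opow hx, ← max_assoc, max_self]

theorem Ordinal.max_aleph0_card_add_of_le {a b : Ordinal} (hba : b ≤ a) :
    max ℵ₀ (a + b).card = max ℵ₀ a.card := by
  refine le_antisymm (max_le (le_max_left _ _) ?_) (max_le_max le_rfl (card_le_card le_self_add))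
  calc (a + b).card = a.card + b.card := card_add a b
    _ ≤ max (max a.card b.card) ℵ₀ := add_le_max _ _
    _ = max ℵ₀ a.card := by rw [max_eq_left (card_le_card hba), max_comm]

theorem Ordinal.ord_card_lt_of_card_eq_of_lt {a b : Ordinal} (hab : a.card = b.card) (hba : b < a) :
    a.card.ord < a :=
  calc a.card.ord = b.card.ord := by rw [hab]
    _ ≤ b := ord_card_le b
    _ < a := hba

theorem mul_closed_noncardinal_intervals (κ : Cardinal) (hκ : Cardinal.aleph0 < κ)
    (α : Ordinal) (hα : α < κ.ord) :
    ∃ β : Ordinal, ∀ η : Ordinal, 1 ≤ η → η ≤ α →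
      (∀ μ < Ordinal.omega0 ^ (Ordinal.omega0 ^ (β + η)),
        ∀ ν < Ordinal.omega0 ^ (Ordinal.omega0 ^ (β + η)),
          μ * ν < Ordinal.omega0 ^ (Ordinal.omega0 ^ (β + η))) ∧
      Ordinal.omega0 ^ (Ordinal.omega0 ^ (β + η)) < κ.ord ∧
      (Ordinal.omega0 ^ (Ordinal.omega0 ^ (β + η))).card.ord ≠
        Ordinal.omega0 ^ (Ordinal.omega0 ^ (β + η)) ∧
      (Ordinal.omega0 ^ (Ordinal.omega0 ^ (β + η))).card =
        (Ordinal.omega0 ^ (Ordinal.omega0 ^ β)).card ∧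
      (Ordinal.omega0 ^ (Ordinal.omega0 ^ (β + η))).card.ord <
        Ordinal.omega0 ^ (Ordinal.omega0 ^ (β + η)) := by
  refine ⟨α, fun η hη hηα => ?_⟩
  have hcard : (ω ^ ω ^ (α + η)).card = (ω ^ ω ^ α).card := by
    rw [card_omega0_opow_omega0_opow, card_omega0_opow_omega0_opow, max_aleph0_card_add_of_le hηα]
  have hlt : ω ^ ω ^ α < ω ^ ω ^ (α + η) := by
    rw [opow_lt_opow_iff_right one_lt_omega0, opow_lt_opow_iff_right one_lt_omega0]
    exact lt_add_of_pos_right α (zero_lt_one.trans_le hη)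
  have hord := ord_card_lt_of_card_eq_of_lt hcard hlt
  refine ⟨fun μ hμ ν hν => isPrincipal_mul_omega0_opow_opow _ hμ hν, ?_, hord.ne, hcard, hord⟩
  rw [lt_ord, hcard, card_omega0_opow_omega0_opow]
  exact max_lt hκ (lt_ord.mp hα)
end

section
/- Let α be an infinite ordinal. Then α is closed under ordinal multiplication (μ · ν < α for all μ, ν < α) if and only if α is closed under the Gödel pairing function, i.e., the canonical order isomorphism from Ord × Ord (with the Gödel well-ordering) to Ord maps pairs of ordinals below α to ordinals below α. -/
/-!
Write `g` for the Gödel pairing function. Since `g` is an order isomorphism onto the ordinals,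
it lies below every map that is strictly monotone for the Gödel order, and dominates every
strictly monotone chain in that order.

If `α` is closed under multiplication (hence under addition, as `α` is infinite), bound `g` by
the strictly monotone code `(μ, ν) ↦ M * (M * max μ ν + μ) + ν` with `M = max μ ν + 1`, which
stays below `α`.

Conversely, let `m = max μ ν`. Enumerating the shell `{(x, y) | max x y = m}` in order gives
`m + m ≤ g (m, m)`, so `α` is closed under addition. Division with remainder by `m` gives the
chain `γ ↦ (m + γ / m, γ % m)`; at `γ = μ * ν ≤ m * m` the quotient is at most `m` and the
remainder below `m`, so both coordinates stay below `α`.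
-/

/-- The Gödel well-ordering on pairs of ordinals: compare first by maximum,
then lexicographically. -/
def GodelLT (p q : Ordinal × Ordinal) : Prop :=
  max p.1 p.2 < max q.1 q.2 ∨
    (max p.1 p.2 = max q.1 q.2 ∧ (p.1 < q.1 ∨ (p.1 = q.1 ∧ p.2 < q.2)))

open Ordinal

theorem godelLT_of_max_le {p q : Ordinal × Ordinal} (hmax : max p.1 p.2 ≤ max q.1 q.2)
    (hlex : p.1 < q.1 ∨ p.1 = q.1 ∧ p.2 < q.2) : GodelLT p q :=
  hmax.lt_or_eq.imp_right fun h => ⟨h, hlex⟩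

section GodelPairing

variable {g : Ordinal × Ordinal → Ordinal}

theorem le_godel_comp_of_strictMono (hg : ∀ p q, GodelLT p q ↔ g p < g q)
    {e : Ordinal → Ordinal × Ordinal} (he : ∀ a b, a < b → GodelLT (e a) (e b)) (γ : Ordinal) :
    γ ≤ g (e γ) :=
  StrictMono.le_apply (f := g ∘ e) fun a b h => (hg _ _).1 (he a b h)

theorem godel_le_of_strictMono (hg : ∀ p q, GodelLT p q ↔ g p < g q)
    (hg_surj : Function.Surjective g) {f : Ordinal × Ordinal → Ordinal}
    (hf : ∀ p q, GodelLT p q → f p < f q) (p : Ordinal × Ordinal) : g p ≤ f p := by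
  induction p using (InvImage.wf g wellFounded_lt).induction with
  | _ p ih =>
    by_contra! hlt
    -- a preimage `q` of `f p` would be a smaller counterexample
    obtain ⟨q, hq⟩ := hg_surj (f p)
    have hqp : g q < g p := hq ▸ hlt
    have hfq : f q < g q := hq ▸ hf q p ((hg q p).2 hqp)
    exact (ih q hqp).not_gt hfq

end GodelPairing

noncomputable def shellEnum (m γ : Ordinal) : Ordinal × Ordinal :=
  if γ < m then (γ, m) else (m, γ - m)

theorem godelLT_shellEnum (m : Ordinal) {a b : Ordinal} (hab : a < b) :
    GodelLT (shellEnum m a) (shellEnum m b) := by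
  unfold shellEnum
  split_ifs with ha hb hb
  · exact godelLT_of_max_le (by simp [ha.le, hb.le]) (.inl hab)
  · exact godelLT_of_max_le (by simp [ha.le]) (.inl ha)
  · exact absurd (hab.trans hb) ha
  · refine godelLT_of_max_le (max_le_max le_rfl ?_) (.inr ⟨rfl, ?_⟩) <;>
      rw [not_lt] at ha hb
    · rw [Ordinal.sub_le, Ordinal.add_sub_cancel_of_le hb]
      exact hab.le
    · rwa [Ordinal.sub_lt_of_le ha, Ordinal.add_sub_cancel_of_le hb]

theorem shellEnum_add_self (m : Ordinal) : shellEnum m (m + m) = (m, m) := by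
  simp [shellEnum]

theorem godelLT_divMod {m : Ordinal} (hm : m ≠ 0) {a b : Ordinal} (hab : a < b) :
    GodelLT (m + a / m, a % m) (m + b / m, b % m) := by
  have hmax (c : Ordinal) : max (m + c / m) (c % m) = m + c / m :=
    max_eq_left ((mod_lt c hm).le.trans le_self_add)
  refine godelLT_of_max_le (by simpa [hmax] using div_le_left hab.le m) ?_
  rcases (div_le_left hab.le m).lt_or_eq with hq | hq
  · exact .inl (add_lt_add_right hq m)
  · refine .inr ⟨by rw [hq], ?_⟩
    rw [← div_add_mod a m, ← div_add_mod b m, hq] at hab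
    exact (add_lt_add_iff_left _).1 hab

theorem Ordinal.mul_add_lt_mul {M x y b : Ordinal} (hb : b < M) (hxy : x < y) :
    M * x + b < M * y :=
  calc M * x + b < M * (x + 1) := by rwa [mul_add_one, add_lt_add_iff_left]
    _ ≤ M * y := by grw [Order.add_one_le_of_lt hxy]

noncomputable def godelCode (p : Ordinal × Ordinal) : Ordinal :=
  (max p.1 p.2 + 1) * ((max p.1 p.2 + 1) * max p.1 p.2 + p.1) + p.2

theorem godelCode_lt_mul (p : Ordinal × Ordinal) :
    godelCode p < (max p.1 p.2 + 1) * ((max p.1 p.2 + 1) * (max p.1 p.2 + 1)) := by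
  have h₁ : p.1 < max p.1 p.2 + 1 := (le_max_left _ _).trans_lt (lt_add_one _)
  have h₂ : p.2 < max p.1 p.2 + 1 := (le_max_right _ _).trans_lt (lt_add_one _)
  exact mul_add_lt_mul h₂ (mul_add_lt_mul h₁ (lt_add_one _))

theorem godelCode_strictMono {p q : Ordinal × Ordinal} (h : GodelLT p q) :
    godelCode p < godelCode q := by
  obtain h | ⟨heq, h | ⟨h₁, h₂⟩⟩ := h
  · have hM : max p.1 p.2 + 1 ≤ max q.1 q.2 := Order.add_one_le_of_lt h
    have hM' : max p.1 p.2 + 1 ≤ max q.1 q.2 + 1 := hM.trans le_self_add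
    calc godelCode p < _ := godelCode_lt_mul p
      _ ≤ (max q.1 q.2 + 1) * ((max q.1 q.2 + 1) * max q.1 q.2) :=
        mul_le_mul' hM' (mul_le_mul' hM' hM)
      _ ≤ godelCode q := (mul_le_mul' le_rfl le_self_add).trans le_self_add
  · unfold godelCode
    rw [← heq]
    exact (mul_add_lt_mul ((le_max_right _ _).trans_lt (lt_add_one _))
      (add_lt_add_right h _)).trans_le le_self_add
  · unfold godelCode
    rw [← heq, h₁]
    exact add_lt_add_right h₂ _

section MulClosed

variable {α : Ordinal}

theorem add_lt_of_mul_closed (hα : ω ≤ α) (hmul : ∀ μ < α, ∀ ν < α, μ * ν < α)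
    {a b : Ordinal} (ha : a < α) (hb : b < α) : a + b < α :=
  calc a + b ≤ max a b + max a b := add_le_add (le_max_left a b) (le_max_right a b)
    _ = max a b * 2 := by rw [← one_add_one_eq_two, mul_add, mul_one]
    _ < α := hmul _ (max_lt ha hb) 2 ((natCast_lt_omega0 2).trans_le hα)

theorem godelCode_lt_of_mul_closed (hα : ω ≤ α) (hmul : ∀ μ < α, ∀ ν < α, μ * ν < α)
    {μ ν : Ordinal} (hμ : μ < α) (hν : ν < α) : godelCode (μ, ν) < α := by
  have hadd {a b : Ordinal} : a < α → b < α → a + b < α := add_lt_of_mul_closed hα hmul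
  have hmax : max μ ν < α := max_lt hμ hν
  have hM : max μ ν + 1 < α := hadd hmax (one_lt_omega0.trans_le hα)
  exact hadd (hmul _ hM _ (hadd (hmul _ hM _ hmax) hμ)) hν

end MulClosed

section GodelClosed

variable {α : Ordinal} {g : Ordinal × Ordinal → Ordinal}

theorem add_lt_of_godel_closed (hg : ∀ p q, GodelLT p q ↔ g p < g q)
    (hclosed : ∀ μ < α, ∀ ν < α, g (μ, ν) < α) {a b : Ordinal} (ha : a < α) (hb : b < α) :
    a + b < α :=
  calc a + b ≤ max a b + max a b := add_le_add (le_max_left a b) (le_max_right a b)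
    _ ≤ g (max a b, max a b) := by
      simpa only [shellEnum_add_self] using
        le_godel_comp_of_strictMono hg (fun _ _ => godelLT_shellEnum (max a b)) (max a b + max a b)
    _ < α := hclosed _ (max_lt ha hb) _ (max_lt ha hb)

theorem mul_lt_of_godel_closed (hg : ∀ p q, GodelLT p q ↔ g p < g q)
    (hclosed : ∀ μ < α, ∀ ν < α, g (μ, ν) < α) {μ ν : Ordinal} (hμ : μ < α) (hν : ν < α) :
    μ * ν < α := by
  rcases eq_or_ne μ 0 with rfl | hμ0
  · rwa [zero_mul]
  set m := max μ ν
  have hm0 : m ≠ 0 := (pos_iff_ne_zero.2 hμ0 |>.trans_le (le_max_left μ ν)).ne'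
  have hmα : m < α := max_lt hμ hν
  have hquot : μ * ν / m ≤ m :=
    div_le_of_le_mul (mul_le_mul' (le_max_left μ ν) (le_max_right μ ν))
  calc μ * ν ≤ g (m + μ * ν / m, μ * ν % m) :=
        le_godel_comp_of_strictMono hg (fun _ _ => godelLT_divMod hm0) (μ * ν)
    _ < α := hclosed _ ((add_le_add_right hquot m).trans_lt
        (add_lt_of_godel_closed hg hclosed hmα hmα)) _ ((mod_lt _ hm0).trans hmα)

end GodelClosed

theorem mul_closed_iff_godel_closed (α : Ordinal) (hα : Ordinal.omega0 ≤ α)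
    (g : Ordinal × Ordinal → Ordinal)
    (hg_iso : ∀ p q, GodelLT p q ↔ g p < g q) (hg_surj : Function.Surjective g) :
    (∀ μ < α, ∀ ν < α, μ * ν < α) ↔ (∀ μ < α, ∀ ν < α, g (μ, ν) < α) := by
  constructor
  · intro hmul μ hμ ν hν
    exact (godel_le_of_strictMono hg_iso hg_surj (fun _ _ => godelCode_strictMono) _).trans_lt
      (godelCode_lt_of_mul_closed hα hmul hμ hν)
  · intro hclosed μ hμ ν hν
    exact mul_lt_of_godel_closed hg_iso hclosed hμ hν
end
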